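/- arXiv:1006.2728 — 5 statements merged into one kernel-verified Lean document; each statement's English description precedes it below -/
import Mathlib

section
/- Let P be a finite p-group and Q a normal subgroup of P. Then the subgroup of Aut(P) consisting of automorphisms that act trivially on both Q and P/Q is a p-group. -/
/-- Let `P` be a finite `p`-group and `Q` a normal subgroup of `P`. Then the subgroup of
`Aut(P)` consisting of automorphisms acting trivially on both `Q` and `P/Q` is a `p`-group. -/
theorem stmt_0 {p : ℕ} (hp : p.Prime) {P : Type*} [Group P] [Finite P]
    (hP : IsPGroup p P) (Q : Subgroup P) (hQ : Q.Normal)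
    (H : Subgroup (MulAut P))
    (hH : ∀ φ : MulAut P, φ ∈ H ↔ ((∀ x ∈ Q, φ x = x) ∧ ∀ x : P, φ x * x⁻¹ ∈ Q)) :
    IsPGroup p H := by
  haveI : Fact p.Prime := ⟨hp⟩
  obtain ⟨n, hn⟩ := IsPGroup.iff_card.mp hP
  have key : ∀ φ : MulAut P, φ ∈ H → ∀ (m : ℕ) (x : P),
      (φ ^ m) x = x * (x⁻¹ * φ x) ^ m := by
    intro φ hφ m x
    obtain ⟨h1, h2⟩ := (hH φ).mp hφ
    have hc : x⁻¹ * φ x ∈ Q := by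
      have := hQ.conj_mem _ (h2 x) x⁻¹
      simpa [mul_assoc] using this
    induction m with
    | zero => simp
    | succ m ih =>
      rw [pow_succ', MulAut.mul_apply, ih, map_mul, map_pow, h1 _ hc, pow_succ']
      rw [← mul_assoc, mul_inv_cancel_left]
  intro g
  refine ⟨n, ?_⟩
  have hg : (g : MulAut P) ^ p ^ n = 1 := by
    ext x
    rw [key g g.2 (p ^ n) x, ← hn, pow_card_eq_one']
    simp
  have : ((g ^ p ^ n : H) : MulAut P) = 1 := by push_cast [hg]; rfl
  exact_mod_cast this
end

section
/- Let P be a finite p-group with subgroups U ⊴ V ≤ P such that C_V(U) ≤ U. If φ is an automorphism of V that acts trivially on U, then φ has p-power order. -/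
/-- If `U ⊴ V ≤ P` with `P` a finite `p`-group and `C_V(U) ≤ U`, then any automorphism of `V`
acting trivially on `U` has `p`-power order. -/
theorem stmt_1 {p : ℕ} (hp : p.Prime) {P : Type*} [Group P] [Finite P]
    (hP : IsPGroup p P) (U V : Subgroup P) (hUV : U ≤ V)
    (hnorm : ∀ g ∈ V, ∀ u ∈ U, g * u * g⁻¹ ∈ U)
    (hcent : ∀ v ∈ V, (∀ u ∈ U, v * u = u * v) → v ∈ U)
    (φ : MulAut V) (hφ : ∀ x : V, (x : P) ∈ U → φ x = x) :
    ∃ n : ℕ, orderOf φ = p ^ n := by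
  classical
  -- `c v = v⁻¹ * φ v` lies in `U`
  have hc : ∀ v : V, ((v⁻¹ * φ v : V) : P) ∈ U := by
    intro v
    apply hcent _ ((v⁻¹ * φ v : V)).2
    intro u hu
    -- φ (v u v⁻¹) = v u v⁻¹, and φ (v u v⁻¹) = φ v * u * (φ v)⁻¹
    have huV : u ∈ V := hUV hu
    have hconj : (v : P) * u * (v : P)⁻¹ ∈ U := hnorm v v.2 u hu
    have hconjV : (v : P) * u * (v : P)⁻¹ ∈ V := hUV hconj
    have h1 : φ (v * ⟨u, huV⟩ * v⁻¹) = v * ⟨u, huV⟩ * v⁻¹ := by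
      apply hφ
      simpa using hconj
    have h2 : φ (v * ⟨u, huV⟩ * v⁻¹) = φ v * ⟨u, huV⟩ * (φ v)⁻¹ := by
      rw [map_mul, map_mul, map_inv]
      congr 1
      congr 1
      exact hφ ⟨u, huV⟩ hu
    have h3 : φ v * ⟨u, huV⟩ * (φ v)⁻¹ = v * ⟨u, huV⟩ * v⁻¹ := h2 ▸ h1
    have h4 : ((φ v : P)) * u * (φ v : P)⁻¹ = (v : P) * u * (v : P)⁻¹ :=
      congrArg (Subtype.val) h3
    -- rearrange to commuting
    have : ((v⁻¹ * φ v : V) : P) * u = u * ((v⁻¹ * φ v : V) : P) := by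
      push_cast
      have h5 : (φ v : P) * u = (v : P) * u * (v : P)⁻¹ * (φ v : P) := by
        rw [← h4]; group
      calc (v : P)⁻¹ * (φ v : P) * u
          = (v : P)⁻¹ * ((φ v : P) * u) := by group
        _ = (v : P)⁻¹ * ((v : P) * u * (v : P)⁻¹ * (φ v : P)) := by rw [h5]
        _ = u * ((v : P)⁻¹ * (φ v : P)) := by group
    exact this
  -- iterate: φ^n v = v * (c v)^n
  have hiter : ∀ (n : ℕ) (v : V), (φ ^ n) v = v * (v⁻¹ * φ v) ^ n := by
    intro n v
    induction n with
    | zero => simp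
    | succ n ih =>
      have hfix : φ (v⁻¹ * φ v) = v⁻¹ * φ v := hφ _ (hc v)
      have : (φ ^ (n + 1)) v = φ ((φ ^ n) v) := by
        rw [pow_succ']; rfl
      have hfixpow : φ ((v⁻¹ * φ v) ^ n) = (v⁻¹ * φ v) ^ n := by
        rw [map_pow, hfix]
      rw [this, ih, map_mul, hfixpow, pow_succ', ← mul_assoc]
      group
  -- get card P = p ^ n
  haveI : Fact p.Prime := ⟨hp⟩
  obtain ⟨n, hn⟩ := hP.exists_card_eq
  have hφpow : φ ^ (p ^ n) = 1 := by
    ext v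
    rw [hiter (p ^ n) v]
    have : ((v⁻¹ * φ v : V) : P) ^ (p ^ n) = 1 := by
      rw [← hn]
      exact pow_card_eq_one'
    have h1 : (v⁻¹ * φ v : V) ^ (p ^ n) = 1 := by
      apply Subtype.ext
      push_cast
      exact this
    simp [h1]
  have hdvd : orderOf φ ∣ p ^ n := orderOf_dvd_of_pow_eq_one hφpow
  obtain ⟨m, _, hm⟩ := (Nat.dvd_prime_pow hp).mp hdvd
  exact ⟨m, hm⟩
end

section
/- Let P be a finite group with normal subgroup T, and let Q ≤ T satisfy C_T(Q) ≤ Q. Then Q·C_P(Q) ∩ T·C_P(T) = Q·C_P(T). -/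
open Pointwise

/-- Let `P` be a finite group, `T ⊴ P`, and `Q ≤ T` with `C_T(Q) ≤ Q`.
Then `Q·C_P(Q) ∩ T·C_P(T) = Q·C_P(T)`. -/
theorem stmt_3 {P : Type*} [Group P] [Finite P] (T Q : Subgroup P)
    (hT : T.Normal) (hQT : Q ≤ T)
    (hcent : Subgroup.centralizer (Q : Set P) ⊓ T ≤ Q) :
    ((Q : Set P) * (Subgroup.centralizer (Q : Set P) : Set P)) ∩
      ((T : Set P) * (Subgroup.centralizer (T : Set P) : Set P))
      = (Q : Set P) * (Subgroup.centralizer (T : Set P) : Set P) := by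
  have hCC : Subgroup.centralizer (T : Set P) ≤ Subgroup.centralizer (Q : Set P) :=
    Subgroup.centralizer_le (by exact_mod_cast hQT)
  ext x
  constructor
  · rintro ⟨⟨q, hq, c, hc, rfl⟩, t, ht, z, hz, hx⟩
    have hc' : c ∈ Subgroup.centralizer (Q : Set P) := hc
    have hz' : z ∈ Subgroup.centralizer (T : Set P) := hz
    have hq' : q ∈ Q := hq
    have ht' : t ∈ T := ht
    have hx' : t * z = q * c := hx
    have h1 : c * z⁻¹ = q⁻¹ * t := by
      rw [mul_inv_eq_iff_eq_mul, mul_assoc, hx', inv_mul_cancel_left]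
    have hczQ : c * z⁻¹ ∈ Q := by
      apply hcent
      rw [Subgroup.mem_inf]
      refine ⟨mul_mem hc' (inv_mem (hCC hz')), ?_⟩
      rw [h1]
      exact mul_mem (inv_mem (hQT hq')) ht'
    exact ⟨q * (c * z⁻¹), mul_mem hq hczQ, z, hz, by group⟩
  · rintro ⟨q, hq, z, hz, rfl⟩
    exact ⟨⟨q, hq, z, hCC hz, rfl⟩, q, hQT hq, z, hz, rfl⟩
end

section
/- Let P be a finite p-group, T ⊴ P, and R ≤ T with C_T(R) ≤ R. Then the set K of automorphisms of the group R·C_P(T) that act trivially on both R and on the quotient Z(R)·C_P(T)/Z(R) is a p-subgroup of Aut(R·C_P(T)). -/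
open scoped Pointwise

section Aux

variable {p : ℕ} {P : Type*} [Group P] [Finite P]

theorem aux_centralizer_normal (T : Subgroup P) (hT : T.Normal) :
    (Subgroup.centralizer (T : Set P)).Normal := by
  constructor
  intro g hg n
  rw [Subgroup.mem_centralizer_iff] at hg ⊢
  intro t ht
  have ht' : n⁻¹ * t * n ∈ T := by
    have := hT.conj_mem t ht n⁻¹
    simpa using this
  have h := hg _ ht'
  have h2 : n * ((n⁻¹ * t * n) * g) * n⁻¹ = n * (g * (n⁻¹ * t * n)) * n⁻¹ := by rw [h]
  calc t * (n * g * n⁻¹) = n * ((n⁻¹ * t * n) * g) * n⁻¹ := by group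
    _ = n * (g * (n⁻¹ * t * n)) * n⁻¹ := h2
    _ = n * g * n⁻¹ * t := by group

end Aux

/-- Let `P` be a finite `p`-group, `T ⊴ P`, `R ≤ T` with `C_T(R) ≤ R`. The set `K` of
automorphisms of `R·C_P(T)` acting trivially on `R` and on `Z(R)·C_P(T)/Z(R)` is a
`p`-subgroup of `Aut(R·C_P(T))`. -/
theorem stmt_4 {p : ℕ} (hp : p.Prime) {P : Type*} [Group P] [Finite P]
    (hP : IsPGroup p P) (T R : Subgroup P) (hT : T.Normal) (hRT : R ≤ T)
    (hcent : Subgroup.centralizer (R : Set P) ⊓ T ≤ R)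
    (K : Subgroup (MulAut ↥(R ⊔ Subgroup.centralizer (T : Set P))))
    (hK : ∀ φ : MulAut ↥(R ⊔ Subgroup.centralizer (T : Set P)), φ ∈ K ↔
      ((∀ x : ↥(R ⊔ Subgroup.centralizer (T : Set P)), (x : P) ∈ R → φ x = x) ∧
       (∀ x : ↥(R ⊔ Subgroup.centralizer (T : Set P)),
          (x : P) ∈ ((Subgroup.centralizer (R : Set P) ⊓ R) ⊔
            Subgroup.centralizer (T : Set P)) →
          ((φ x : P) * (x : P)⁻¹) ∈ Subgroup.centralizer (R : Set P) ⊓ R))) :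
    IsPGroup p K := by
  classical
  haveI : Fact p.Prime := ⟨hp⟩
  haveI hCnorm : (Subgroup.centralizer (T : Set P)).Normal := aux_centralizer_normal T hT
  -- abbreviations as types only
  -- elements of Zr commute with elements of Zr
  have hcomm : ∀ a b : P, a ∈ Subgroup.centralizer (R : Set P) ⊓ R →
      b ∈ Subgroup.centralizer (R : Set P) ⊓ R → a * b = b * a :=
    fun a b ha hb => (Subgroup.mem_centralizer_iff.mp hb.1 a ha.2)
  have key2 : ∀ (φ : K)
      (x : {x : ↥(R ⊔ Subgroup.centralizer (T : Set P)) //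
        (x : P) ∈ (Subgroup.centralizer (R : Set P) ⊓ R) ⊔ Subgroup.centralizer (T : Set P)}),
      ((φ : MulAut ↥(R ⊔ Subgroup.centralizer (T : Set P))) x.1 : P) * ((x.1 : P))⁻¹ ∈
        Subgroup.centralizer (R : Set P) ⊓ R :=
    fun φ x => ((hK φ.1).mp φ.2).2 x.1 x.2
  let f : K →* ({x : ↥(R ⊔ Subgroup.centralizer (T : Set P)) //
        (x : P) ∈ (Subgroup.centralizer (R : Set P) ⊓ R) ⊔ Subgroup.centralizer (T : Set P)} →
        ↥(Subgroup.centralizer (R : Set P) ⊓ R)) :=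
    { toFun := fun φ x => ⟨(φ.1 x.1 : P) * ((x.1 : P))⁻¹, key2 φ x⟩
      map_one' := by
        funext x
        ext
        simp
      map_mul' := by
        intro φ ψ
        funext x
        ext
        show (((φ.1 * ψ.1 : MulAut _)) x.1 : P) * (x.1 : P)⁻¹
            = ((φ.1 x.1 : P) * (x.1 : P)⁻¹) * ((ψ.1 x.1 : P) * (x.1 : P)⁻¹)
        set θ : ↥(R ⊔ Subgroup.centralizer (T : Set P)) := (ψ.1 x.1) * (x.1)⁻¹ with hθ
        have hθc : (θ : P) = (ψ.1 x.1 : P) * (x.1 : P)⁻¹ := by simp [hθ]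
        have hθZr : (θ : P) ∈ Subgroup.centralizer (R : Set P) ⊓ R := by
          rw [hθc]; exact key2 ψ x
        have hψx : ψ.1 x.1 = θ * x.1 := by rw [hθ]; group
        have hφθ : φ.1 θ = θ := ((hK φ.1).mp φ.2).1 θ hθZr.2
        have hφx : (φ.1 x.1 : P) * (x.1 : P)⁻¹ ∈ Subgroup.centralizer (R : Set P) ⊓ R :=
          key2 φ x
        have hmul : (φ.1 * ψ.1 : MulAut _) x.1 = θ * φ.1 x.1 := by
          show φ.1 (ψ.1 x.1) = _
          rw [hψx, map_mul, hφθ]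
        rw [hmul]
        have hc := hcomm _ _ hθZr hφx
        push_cast
        calc (θ : P) * (φ.1 x.1 : P) * (x.1 : P)⁻¹
            = (θ : P) * ((φ.1 x.1 : P) * (x.1 : P)⁻¹) := by group
          _ = ((φ.1 x.1 : P) * (x.1 : P)⁻¹) * (θ : P) := hc
          _ = ((φ.1 x.1 : P) * (x.1 : P)⁻¹) * ((ψ.1 x.1 : P) * (x.1 : P)⁻¹) := by
              rw [hθc] }
  have hinj : Function.Injective f := by
    rw [injective_iff_map_eq_one]
    intro φ hφ
    have hfix : ∀ x : ↥(R ⊔ Subgroup.centralizer (T : Set P)),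
        (x : P) ∈ (Subgroup.centralizer (R : Set P) ⊓ R) ⊔ Subgroup.centralizer (T : Set P) →
        φ.1 x = x := by
      intro x hx
      have h0 := congrFun hφ ⟨x, hx⟩
      have h1 : (φ.1 x : P) * (x : P)⁻¹ = 1 := congrArg Subtype.val h0
      exact Subtype.ext (mul_inv_eq_one.mp h1)
    have hfixR : ∀ x : ↥(R ⊔ Subgroup.centralizer (T : Set P)), (x : P) ∈ R → φ.1 x = x :=
      ((hK φ.1).mp φ.2).1
    ext x
    show (φ.1 x : P) = (x : P)
    have hx : (x : P) ∈ ((R : Set P) * ((Subgroup.centralizer (T : Set P)) : Set P)) := by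
      rw [← Subgroup.mul_normal R (Subgroup.centralizer (T : Set P))]
      exact x.2
    obtain ⟨r, hr, c, hc, hrc⟩ := hx
    have hrG : r ∈ R ⊔ Subgroup.centralizer (T : Set P) := Subgroup.mem_sup_left hr
    have hcG : c ∈ R ⊔ Subgroup.centralizer (T : Set P) := Subgroup.mem_sup_right hc
    have hxeq : x = (⟨r, hrG⟩ : ↥(R ⊔ Subgroup.centralizer (T : Set P))) * ⟨c, hcG⟩ := by
      ext; simp [← hrc]
    rw [hxeq, map_mul, hfixR ⟨r, hrG⟩ hr,
      hfix ⟨c, hcG⟩ (Subgroup.mem_sup_right hc)]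
  haveI : Finite ↥(R ⊔ Subgroup.centralizer (T : Set P)) := Subtype.finite
  have hZrP : IsPGroup p ↥(Subgroup.centralizer (R : Set P) ⊓ R) :=
    hP.to_subgroup _
  have hpi : IsPGroup p ({x : ↥(R ⊔ Subgroup.centralizer (T : Set P)) //
        (x : P) ∈ (Subgroup.centralizer (R : Set P) ⊓ R) ⊔ Subgroup.centralizer (T : Set P)} →
        ↥(Subgroup.centralizer (R : Set P) ⊓ R)) := by
    rw [IsPGroup.iff_card]
    obtain ⟨n, hn⟩ := IsPGroup.iff_card.mp hZrP
    refine ⟨n * Nat.card ({x : ↥(R ⊔ Subgroup.centralizer (T : Set P)) //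
        (x : P) ∈ (Subgroup.centralizer (R : Set P) ⊓ R) ⊔ Subgroup.centralizer (T : Set P)}), ?_⟩
    rw [Nat.card_fun, hn, ← pow_mul]
  exact hpi.of_injective f hinj
end

section
/- Let G be a finite group and g a p'-element of G. Then g centralizes the hypercentre Z_∞(G). -/
/-!
Induct along the upper central series. If `x ∈ N ∩ Z_{n+1}`, the commutator `c = ⁅g, x⁆`
lies in `N ∩ Z_n`, so `g` commutes with `c` by induction; then `⁅g ^ k, x⁆ = c ^ k`, and
`k = orderOf g` gives `c ^ orderOf g = 1`. As `c` is a `p`-element and `orderOf g` is prime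
to `p`, `c = 1`.
-/

open scoped commutatorElement

theorem IsPGroup.eq_one_of_pow_eq_one {p n : ℕ} {H : Type*} [Group H] (hH : IsPGroup p H)
    (hn : p.Coprime n) {c : H} (hc : c ^ n = 1) : c = 1 :=
  orderOf_eq_one_iff.mp <| (hH.orderOf_coprime hn c).eq_one_of_dvd (orderOf_dvd_of_pow_eq_one hc)

theorem commutatorElement_pow_left_of_commute {G : Type*} [Group G] {g x : G}
    (h : Commute g ⁅g, x⁆) (k : ℕ) : ⁅g ^ k, x⁆ = ⁅g, x⁆ ^ k := by
  induction k with
  | zero => simp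
  | succ k ih =>
    calc ⁅g ^ (k + 1), x⁆ = g * ⁅g ^ k, x⁆ * g⁻¹ * ⁅g, x⁆ := by
          simp only [commutatorElement_def, pow_succ']; group
      _ = ⁅g, x⁆ ^ (k + 1) := by
          rw [ih, (h.pow_right k).eq, mul_inv_cancel_right, pow_succ]

theorem commutatorElement_pow_orderOf_eq_one {G : Type*} [Group G] {g x : G}
    (h : Commute g ⁅g, x⁆) : ⁅g, x⁆ ^ orderOf g = 1 := by
  rw [← commutatorElement_pow_left_of_commute h, pow_orderOf_eq_one, commutatorElement_one_left]

theorem commute_of_mem_upperCentralSeries {p : ℕ} {G : Type*} [Group G] {N : Subgroup G}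
    (hN : N.Normal) (hNp : IsPGroup p N) {g : G} (hg : (orderOf g).Coprime p) (n : ℕ) {x : G}
    (hxN : x ∈ N) (hx : x ∈ Subgroup.upperCentralSeries G n) : Commute g x := by
  induction n generalizing x with
  | zero =>
    rw [Subgroup.upperCentralSeries_zero, Subgroup.mem_bot] at hx
    exact hx ▸ Commute.one_right g
  | succ n ih =>
    have hcN : ⁅g, x⁆ ∈ N := N.mul_mem (hN.conj_mem x hxN g) (N.inv_mem hxN)
    have hcZ : ⁅g, x⁆ ∈ Subgroup.upperCentralSeries G n := by
      rw [← commutatorElement_inv]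
      exact inv_mem (Subgroup.mem_upperCentralSeries_succ_iff.mp hx g)
    have hc : (⟨⁅g, x⁆, hcN⟩ : N) ^ orderOf g = 1 :=
      Subtype.ext (commutatorElement_pow_orderOf_eq_one (ih hcN hcZ))
    exact commutatorElement_eq_one_iff_commute.mp
      (congrArg Subtype.val (hNp.eq_one_of_pow_eq_one hg.symm hc))

theorem stmt_6_general {p : ℕ} {G : Type*} [Group G]
    (N : Subgroup G) (hN : N.Normal) (hNp : IsPGroup p N)
    (hNInf : N ≤ (⨆ n, upperCentralSeries G n : Subgroup G))
    (g : G) (hg : Nat.Coprime (orderOf g) p) :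
    ∀ x ∈ N, g * x = x * g := by
  intro x hxN
  have hdir := (Subgroup.upperCentralSeries_mono G).directed_le
  obtain ⟨n, hn⟩ := (Subgroup.mem_iSup_of_directed hdir).mp (hNInf hxN)
  exact commute_of_mem_upperCentralSeries hN hNp hg n hxN hn

/-- If `N ⊴ G` is a finite `p`-group contained in the hypercentre of `G` and `g ∈ G` has
order coprime to `p`, then `g` centralizes `N`. -/
theorem stmt_6 {p : ℕ} (hp : p.Prime) {G : Type*} [Group G] [Finite G]
    (N : Subgroup G) (hN : N.Normal) (hNp : IsPGroup p N)
    (hNInf : N ≤ (⨆ n, upperCentralSeries G n : Subgroup G))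
    (g : G) (hg : Nat.Coprime (orderOf g) p) :
    ∀ x ∈ N, g * x = x * g :=
  stmt_6_general N hN hNp hNInf g hg
end
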